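/- arXiv:2209.07142 — 3 statements merged into one kernel-verified Lean document; each statement's English description precedes it below -/
import Mathlib

section
/- As z → ∞, erfc(z) = (1/(2z) - 1/(4z³) + o(1/z³)) e^{-z²}; equivalently, z³·(e^{z²} erfc(z) - 1/(2z) + 1/(4z³)) → 0 as z → ∞. -/
/-!
With `F(z) = e^{-z²}(1/(2z) - 1/(4z³))` one computes `-F'(s) = e^{-s²} - 3/(4s⁴) e^{-s²}`, so
`erfc z - F z = ∫_z^∞ 3/(4s⁴) e^{-s²} ds`. Bounding `1/s⁴ ≤ s/z⁵` and integrating `s e^{-s²}`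
exactly gives `0 ≤ erfc z - F z ≤ 3/(8z⁵) e^{-z²}`, so the rescaled remainder is `O(1/z²)`.
-/

noncomputable def erfc (z : ℝ) : ℝ := ∫ s in Set.Ioi z, Real.exp (-s^2)

open Real MeasureTheory Filter Set Topology

lemma hasDerivAt_exp_neg_sq (x : ℝ) :
    HasDerivAt (fun t => exp (-t ^ 2)) (-(2 * x) * exp (-x ^ 2)) x := by
  simpa [mul_comm] using ((hasDerivAt_pow 2 x).neg).exp

lemma tendsto_exp_neg_sq_atTop : Tendsto (fun t => exp (-t ^ 2)) atTop (𝓝 0) :=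
  tendsto_exp_atBot.comp <| tendsto_neg_atBot_iff.mpr <| tendsto_pow_atTop two_ne_zero

lemma integrableOn_exp_neg_sq (a : ℝ) : IntegrableOn (fun s => exp (-s ^ 2)) (Ioi a) := by
  simpa using (integrable_exp_neg_mul_sq one_pos).integrableOn

lemma integrableOn_mul_exp_neg_sq (a : ℝ) :
    IntegrableOn (fun s => s * exp (-s ^ 2)) (Ioi a) := by
  simpa using (integrable_mul_exp_neg_mul_sq one_pos).integrableOn

lemma integral_Ioi_mul_exp_neg_sq (a : ℝ) : ∫ s in Ioi a, s * exp (-s ^ 2) = exp (-a ^ 2) / 2 := by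
  have hderiv (x : ℝ) : HasDerivAt (fun t => -(exp (-t ^ 2) / 2)) (x * exp (-x ^ 2)) x :=
    ((hasDerivAt_exp_neg_sq x).div_const 2).neg.congr_deriv (by ring)
  have hlim := (tendsto_exp_neg_sq_atTop.div_const 2).neg
  rw [integral_Ioi_of_hasDerivAt_of_tendsto' (fun x _ => hderiv x)
    (integrableOn_mul_exp_neg_sq a) hlim]
  ring

noncomputable def erfcApprox (z : ℝ) : ℝ := exp (-z ^ 2) * ((2 * z)⁻¹ - (4 * z ^ 3)⁻¹)

lemma hasDerivAt_erfcApprox {x : ℝ} (hx : x ≠ 0) :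
    HasDerivAt erfcApprox (3 / (4 * x ^ 4) * exp (-x ^ 2) - exp (-x ^ 2)) x := by
  have hlin : HasDerivAt (fun t : ℝ => 2 * t) 2 x := by
    simpa using (hasDerivAt_id x).const_mul 2
  have hcube : HasDerivAt (fun t : ℝ => 4 * t ^ 3) (4 * (3 * x ^ 2)) x := by
    simpa using (hasDerivAt_pow 3 x).const_mul 4
  refine ((hasDerivAt_exp_neg_sq x).mul ((hlin.inv (by positivity)).sub
    (hcube.inv (by positivity)))).congr_deriv ?_
  simp only [Pi.sub_apply, Pi.inv_apply]
  field_simp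
  ring

lemma tendsto_erfcApprox_atTop : Tendsto erfcApprox atTop (𝓝 0) := by
  have hlin : Tendsto (fun s : ℝ => 2 * s) atTop atTop :=
    tendsto_id.const_mul_atTop two_pos
  have hcube : Tendsto (fun s : ℝ => 4 * s ^ 3) atTop atTop :=
    (tendsto_pow_atTop three_ne_zero).const_mul_atTop four_pos
  have := tendsto_exp_neg_sq_atTop.mul
    ((tendsto_inv_atTop_zero.comp hlin).sub (tendsto_inv_atTop_zero.comp hcube))
  rwa [sub_zero, mul_zero] at this

section Remainder

variable {z : ℝ}

lemma integrableOn_erfc_remainder (hz : 1 ≤ z) :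
    IntegrableOn (fun s => 3 / (4 * s ^ 4) * exp (-s ^ 2)) (Ioi z) := by
  refine ((integrableOn_exp_neg_sq z).const_mul (3 / 4)).mono' (by fun_prop) ?_
  filter_upwards [ae_restrict_mem measurableSet_Ioi] with s hs
  have hs4 : 1 ≤ s ^ 4 := one_le_pow₀ (hz.trans hs.out.le)
  rw [norm_of_nonneg (by positivity)]
  refine mul_le_mul_of_nonneg_right ?_ (exp_pos _).le
  rw [div_le_div_iff₀ (by positivity) four_pos]
  linarith

lemma erfc_sub_erfcApprox (hz : 1 ≤ z) :
    erfc z - erfcApprox z = ∫ s in Ioi z, 3 / (4 * s ^ 4) * exp (-s ^ 2) := by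
  have hderiv (x : ℝ) (hx : x ∈ Ici z) : HasDerivAt (fun t => -erfcApprox t)
      (exp (-x ^ 2) - 3 / (4 * x ^ 4) * exp (-x ^ 2)) x :=
    (hasDerivAt_erfcApprox (by linarith [hx.out] : x ≠ 0)).neg.congr_deriv (by ring)
  have hint := integrableOn_erfc_remainder hz
  have hmain := integral_Ioi_of_hasDerivAt_of_tendsto' hderiv
    ((integrableOn_exp_neg_sq z).sub hint) tendsto_erfcApprox_atTop.neg
  rw [integral_sub (integrableOn_exp_neg_sq z) hint, neg_zero, zero_sub, neg_neg] at hmain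
  rw [erfc, ← hmain]
  ring

lemma erfc_sub_erfcApprox_nonneg (hz : 1 ≤ z) : 0 ≤ erfc z - erfcApprox z := by
  rw [erfc_sub_erfcApprox hz]
  refine setIntegral_nonneg measurableSet_Ioi fun s hs => ?_
  have : 0 < s := by linarith [hs.out]
  positivity

lemma erfc_sub_erfcApprox_le (hz : 1 ≤ z) :
    erfc z - erfcApprox z ≤ 3 / (8 * z ^ 5) * exp (-z ^ 2) := by
  have hz0 : 0 < z := by linarith
  have hbound (s : ℝ) (hs : s ∈ Ioi z) :
      3 / (4 * s ^ 4) * exp (-s ^ 2) ≤ 3 / (4 * z ^ 5) * (s * exp (-s ^ 2)) := by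
    have hs0 : 0 < s := hz0.trans hs
    have hz5 : z ^ 5 ≤ s ^ 5 := by gcongr; exact hs.out.le
    rw [← mul_assoc]
    gcongr
    rw [div_le_iff₀ (by positivity)]
    calc 3 = 3 / (4 * z ^ 5) * (4 * z ^ 5) := by field_simp
      _ ≤ 3 / (4 * z ^ 5) * (4 * s ^ 5) := by gcongr
      _ = 3 / (4 * z ^ 5) * s * (4 * s ^ 4) := by ring
  calc erfc z - erfcApprox z = ∫ s in Ioi z, 3 / (4 * s ^ 4) * exp (-s ^ 2) :=
        erfc_sub_erfcApprox hz
    _ ≤ ∫ s in Ioi z, 3 / (4 * z ^ 5) * (s * exp (-s ^ 2)) :=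
        setIntegral_mono_on (integrableOn_erfc_remainder hz)
          ((integrableOn_mul_exp_neg_sq z).const_mul _) measurableSet_Ioi hbound
    _ = 3 / (8 * z ^ 5) * exp (-z ^ 2) := by
        rw [integral_const_mul, integral_Ioi_mul_exp_neg_sq]
        ring

end Remainder

theorem erfc_second_order_asymptotic :
    Filter.Tendsto
      (fun z : ℝ => z ^ 3 * (Real.exp (z ^ 2) * erfc z - 1 / (2 * z) + 1 / (4 * z ^ 3)))
      Filter.atTop (nhds 0) := by
  have hrescale (z : ℝ) (hz : z ≠ 0) :
      z ^ 3 * (exp (z ^ 2) * erfc z - 1 / (2 * z) + 1 / (4 * z ^ 3)) =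
        z ^ 3 * exp (z ^ 2) * (erfc z - erfcApprox z) := by
    rw [erfcApprox, exp_neg]
    field_simp
    ring
  have hlim : Tendsto (fun z : ℝ => 3 / (8 * z ^ 2)) atTop (𝓝 0) :=
    tendsto_const_nhds.div_atTop
      ((tendsto_pow_atTop two_ne_zero).const_mul_atTop (by norm_num))
  refine squeeze_zero' ?_ ?_ hlim <;> filter_upwards [eventually_ge_atTop 1] with z hz <;>
    have hz0 : 0 < z := by linarith
  · rw [hrescale z hz0.ne']
    have := erfc_sub_erfcApprox_nonneg hz
    positivity
  · calc _ = z ^ 3 * exp (z ^ 2) * (erfc z - erfcApprox z) := hrescale z hz0.ne'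
      _ ≤ z ^ 3 * exp (z ^ 2) * (3 / (8 * z ^ 5) * exp (-z ^ 2)) := by
          gcongr; exact erfc_sub_erfcApprox_le hz
      _ = 3 / (8 * z ^ 2) := by
          rw [exp_neg]
          field_simp
end

section
/- As z → ∞, z²·|z erfc(z) e^{z²} - 1/2| tends to 1/4. -/
open Set Filter MeasureTheory Real Topology

noncomputable def expNegSqTail (k : ℕ) (z : ℝ) : ℝ := ∫ s in Ioi z, exp (-s ^ 2) / s ^ k

lemma erfc_eq_expNegSqTail_zero (z : ℝ) : erfc z = expNegSqTail 0 z := by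
  simp [erfc, expNegSqTail]

lemma hasDerivAt_exp_neg_sq_div_pow (k : ℕ) {s : ℝ} (hs : s ≠ 0) :
    HasDerivAt (fun s : ℝ => exp (-s ^ 2) / s ^ (k + 1))
      (-(2 * (exp (-s ^ 2) / s ^ k) + (k + 1) * (exp (-s ^ 2) / s ^ (k + 2)))) s := by
  have hexp : HasDerivAt (fun s : ℝ => exp (-s ^ 2)) (exp (-s ^ 2) * -(2 * s)) s := by
    simpa using ((hasDerivAt_pow 2 s).neg).exp
  refine (hexp.fun_div (hasDerivAt_pow (k + 1) s) (pow_ne_zero _ hs)).congr_deriv ?_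
  rw [Nat.add_sub_cancel]
  field_simp
  push_cast
  ring

lemma tendsto_exp_neg_sq_div_pow_atTop (k : ℕ) :
    Tendsto (fun s : ℝ => exp (-s ^ 2) / s ^ (k + 1)) atTop (𝓝 0) := by
  have hexp : Tendsto (fun s : ℝ => exp (-s ^ 2)) atTop (𝓝 0) :=
    tendsto_exp_atBot.comp (tendsto_neg_atTop_atBot.comp (tendsto_pow_atTop two_ne_zero))
  exact hexp.div_atTop (tendsto_pow_atTop k.succ_ne_zero)

lemma integrableOn_exp_neg_sq_div_pow (k : ℕ) {z : ℝ} (hz : 0 < z) :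
    IntegrableOn (fun s : ℝ => exp (-s ^ 2) / s ^ k) (Ioi z) := by
  have hgauss : Integrable (fun s : ℝ => exp (-s ^ 2) / z ^ k) := by
    simpa using (integrable_exp_neg_mul_sq one_pos).div_const (z ^ k)
  have hmeas : Measurable fun s : ℝ => exp (-s ^ 2) / s ^ k := by fun_prop
  refine hgauss.integrableOn.mono' hmeas.aestronglyMeasurable ?_
  filter_upwards [self_mem_ae_restrict measurableSet_Ioi] with s (hs : z < s)
  have : 0 < s := hz.trans hs
  rw [norm_of_nonneg (by positivity)]
  gcongr

lemma expNegSqTail_nonneg (k : ℕ) {z : ℝ} (hz : 0 ≤ z) : 0 ≤ expNegSqTail k z :=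
  setIntegral_nonneg measurableSet_Ioi fun s (hs : z < s) => by
    have : 0 < s := hz.trans_lt hs
    positivity

lemma expNegSqTail_recurrence (k : ℕ) {z : ℝ} (hz : 0 < z) :
    2 * expNegSqTail k z + (k + 1) * expNegSqTail (k + 2) z = exp (-z ^ 2) / z ^ (k + 1) := by
  have hk := (integrableOn_exp_neg_sq_div_pow k hz).const_mul 2
  have hk2 := (integrableOn_exp_neg_sq_div_pow (k + 2) hz).const_mul ((k : ℝ) + 1)
  have hparts := integral_Ioi_of_hasDerivAt_of_tendsto'
    (fun s (hs : z ≤ s) => hasDerivAt_exp_neg_sq_div_pow k (hz.trans_le hs).ne')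
    (hk.add hk2).neg (tendsto_exp_neg_sq_div_pow_atTop k)
  rw [integral_neg, integral_add hk hk2, integral_const_mul, integral_const_mul] at hparts
  simp only [expNegSqTail]
  linarith

lemma expNegSqTail_le (k : ℕ) {z : ℝ} (hz : 0 < z) :
    expNegSqTail k z ≤ exp (-z ^ 2) / (2 * z ^ (k + 1)) := by
  have hrec := expNegSqTail_recurrence k hz
  have hnonneg := expNegSqTail_nonneg (k + 2) hz.le
  rw [mul_comm 2, ← div_div, ← hrec]
  linarith [mul_nonneg k.cast_add_one_pos.le hnonneg]

lemma erfc_eq_asymptotic_add_expNegSqTail {z : ℝ} (hz : 0 < z) :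
    erfc z = exp (-z ^ 2) / (2 * z) - exp (-z ^ 2) / (4 * z ^ 3) + 3 / 4 * expNegSqTail 4 z := by
  have h0 := expNegSqTail_recurrence 0 hz
  have h2 := expNegSqTail_recurrence 2 hz
  norm_num at h0 h2
  rw [erfc_eq_expNegSqTail_zero]
  linear_combination h0 / 2 - h2 / 4

lemma tendsto_pow_mul_exp_sq_mul_expNegSqTail (k : ℕ) :
    Tendsto (fun z => z ^ k * exp (z ^ 2) * expNegSqTail (k + 1) z) atTop (𝓝 0) := by
  have hbound : Tendsto (fun z : ℝ => 1 / (2 * z ^ 2)) atTop (𝓝 0) :=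
    tendsto_const_nhds.div_atTop ((tendsto_pow_atTop two_ne_zero).const_mul_atTop two_pos)
  refine squeeze_zero' ?_ ?_ hbound
  · filter_upwards [eventually_gt_atTop 0] with z hz
    have := expNegSqTail_nonneg (k + 1) hz.le
    positivity
  · filter_upwards [eventually_gt_atTop 0] with z hz
    calc z ^ k * exp (z ^ 2) * expNegSqTail (k + 1) z
        ≤ z ^ k * exp (z ^ 2) * (exp (-z ^ 2) / (2 * z ^ (k + 2))) := by
          gcongr
          exact expNegSqTail_le (k + 1) hz
      _ = 1 / (2 * z ^ 2) := by
          rw [exp_neg]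
          field_simp
          ring

lemma sq_mul_deviation_eq {z : ℝ} (hz : 0 < z) :
    z ^ 2 * (z * erfc z * exp (z ^ 2) - 1 / 2)
      = 3 / 4 * (z ^ 3 * exp (z ^ 2) * expNegSqTail 4 z) - 1 / 4 := by
  rw [erfc_eq_asymptotic_add_expNegSqTail hz, exp_neg]
  field_simp
  ring

theorem erfc_deviation_asymptotic :
    Filter.Tendsto
      (fun z : ℝ => z ^ 2 * |z * erfc z * Real.exp (z ^ 2) - 1 / 2|)
      Filter.atTop (nhds (1 / 4)) := by
  have hlim : Tendsto (fun z => |3 / 4 * (z ^ 3 * exp (z ^ 2) * expNegSqTail 4 z) - 1 / 4|)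
      atTop (𝓝 (1 / 4)) := by
    simpa using (((tendsto_pow_mul_exp_sq_mul_expNegSqTail 3).const_mul (3 / 4)).sub_const
      (1 / 4 : ℝ)).abs
  refine hlim.congr' ?_
  filter_upwards [eventually_gt_atTop 0] with z hz
  rw [← sq_mul_deviation_eq hz, abs_mul, abs_of_pos (by positivity)]
end

section
/- Fix reals a, x with x < a, t > 0 and u_a < 0. For ε > 0 set A_ε = (a-x)/√(2tε). Then erfc(A_ε)·e^{-u_a/ε} → 0 as ε → 0⁺ when x < a - √(-2 u_a t), and erfc(A_ε)·e^{-u_a/ε} → ∞ as ε → 0⁺ when a - √(-2 u_a t) < x < a. -/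
/-!
The Gaussian tail bounds `exp (-(z + 1)^2) ≤ erfc z ≤ exp (-z^2) / z` (for `z > 0`) reduce the
question to the sign of an exponent. With `y = 1 / √ε` and `k = (a - x) / √(2t)` the quantity
is `erfc (k y) * exp (-u_a y^2)`, which lies between `exp ((-u_a - k^2) y^2 - 2 k y - 1)` and
`exp ((-u_a - k^2) y^2) / (k y)`. The coefficient `-u_a - k^2` is negative exactly when
`x < a - √(-2 u_a t)` and positive exactly when `a - √(-2 u_a t) < x < a`.
-/

open Real MeasureTheory Filter Set Topology

lemma integrable_exp_neg_sq : Integrable (fun s : ℝ => exp (-s ^ 2)) := by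
  simpa using integrable_exp_neg_mul_sq one_pos

lemma erfc_nonneg (z : ℝ) : 0 ≤ erfc z :=
  setIntegral_nonneg measurableSet_Ioi fun _ _ => (exp_pos _).le

lemma erfc_le_exp_neg_sq_div {z : ℝ} (hz : 0 < z) : erfc z ≤ exp (-z ^ 2) / z := by
  have hneg : -z < 0 := neg_lt_zero.2 hz
  calc erfc z ≤ ∫ s in Ioi z, exp (-z * s) := by
        refine setIntegral_mono_on integrable_exp_neg_sq.integrableOn
          (integrableOn_exp_mul_Ioi hneg z) measurableSet_Ioi fun s (hs : z < s) => ?_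
        exact exp_le_exp.2 (by nlinarith)
    _ = exp (-z ^ 2) / z := by
        rw [integral_exp_mul_Ioi hneg, neg_div_neg_eq]
        ring_nf

lemma exp_neg_add_one_sq_le_erfc {z : ℝ} (hz : 0 ≤ z) : exp (-(z + 1) ^ 2) ≤ erfc z :=
  calc exp (-(z + 1) ^ 2) = ∫ _ in Ioc z (z + 1), exp (-(z + 1) ^ 2) := by
        simp [Real.volume_real_Ioc]
    _ ≤ ∫ s in Ioc z (z + 1), exp (-s ^ 2) :=
        setIntegral_mono_on (integrableOn_const (by simp))
          integrable_exp_neg_sq.integrableOn measurableSet_Ioc fun s hs =>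
            exp_le_exp.2 (by nlinarith [hs.1, hs.2])
    _ ≤ erfc z :=
        setIntegral_mono_set integrable_exp_neg_sq.integrableOn
          (.of_forall fun _ => (exp_pos _).le) Ioc_subset_Ioi_self.eventuallyLE

lemma tendsto_erfc_mul_mul_exp_mul_sq_zero {k b : ℝ} (hk : 0 < k) (hb : b ≤ k ^ 2) :
    Tendsto (fun y => erfc (k * y) * exp (b * y ^ 2)) atTop (𝓝 0) := by
  have hbound : Tendsto (fun y => (k * y)⁻¹) atTop (𝓝 0) :=
    tendsto_inv_atTop_zero.comp (tendsto_id.const_mul_atTop hk)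
  refine squeeze_zero' (.of_forall fun y => mul_nonneg (erfc_nonneg _) (exp_pos _).le) ?_ hbound
  filter_upwards [eventually_gt_atTop 0] with y hy
  have hky : 0 < k * y := mul_pos hk hy
  calc erfc (k * y) * exp (b * y ^ 2)
      ≤ exp (-(k * y) ^ 2) / (k * y) * exp (b * y ^ 2) :=
        mul_le_mul_of_nonneg_right (erfc_le_exp_neg_sq_div hky) (exp_pos _).le
    _ = exp ((b - k ^ 2) * y ^ 2) * (k * y)⁻¹ := by
        rw [div_mul_eq_mul_div, ← exp_add]
        ring_nf
    _ ≤ 1 * (k * y)⁻¹ := by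
        gcongr
        exact exp_le_one_iff.2 (mul_nonpos_of_nonpos_of_nonneg (by linarith) (sq_nonneg y))
    _ = (k * y)⁻¹ := one_mul _

lemma tendsto_erfc_mul_mul_exp_mul_sq_atTop {k b : ℝ} (hk : 0 ≤ k) (hb : k ^ 2 < b) :
    Tendsto (fun y => erfc (k * y) * exp (b * y ^ 2)) atTop atTop := by
  have hexponent : Tendsto (fun y => y * ((b - k ^ 2) * y - 2 * k) - 1) atTop atTop :=
    tendsto_atTop_add_const_right _ _ <| tendsto_id.atTop_mul_atTop₀ <|
      tendsto_atTop_add_const_right _ _ (tendsto_id.const_mul_atTop (sub_pos.2 hb))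
  refine tendsto_atTop_mono' _ ?_ (tendsto_exp_atTop.comp hexponent)
  filter_upwards [eventually_ge_atTop 0] with y hy
  calc exp (y * ((b - k ^ 2) * y - 2 * k) - 1) = exp (-(k * y + 1) ^ 2) * exp (b * y ^ 2) := by
        rw [← exp_add]
        ring_nf
    _ ≤ erfc (k * y) * exp (b * y ^ 2) :=
        mul_le_mul_of_nonneg_right (exp_neg_add_one_sq_le_erfc (mul_nonneg hk hy)) (exp_pos _).le

theorem erfc_A_eps_exp_limit_general (a x t u_a : ℝ) (hx : x < a) (ht : 0 < t) :
    (x < a - Real.sqrt (-2 * u_a * t) →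
      Filter.Tendsto
        (fun ε : ℝ => erfc ((a - x) / Real.sqrt (2 * t * ε)) * Real.exp (-u_a / ε))
        (nhdsWithin 0 (Set.Ioi 0)) (nhds 0)) ∧
    (a - Real.sqrt (-2 * u_a * t) < x →
      Filter.Tendsto
        (fun ε : ℝ => erfc ((a - x) / Real.sqrt (2 * t * ε)) * Real.exp (-u_a / ε))
        (nhdsWithin 0 (Set.Ioi 0)) Filter.atTop) := by
  have hax : 0 < a - x := sub_pos.2 hx
  have h2t : 0 < 2 * t := by positivity
  set k := (a - x) / √(2 * t)
  have hk : 0 < k := div_pos hax (sqrt_pos.2 h2t)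
  have hk2 : k ^ 2 = (a - x) ^ 2 / (2 * t) := by rw [div_pow, sq_sqrt h2t.le]
  have hy : Tendsto (fun ε : ℝ => √ε⁻¹) (𝓝[>] 0) atTop :=
    tendsto_sqrt_atTop.comp tendsto_inv_nhdsGT_zero
  have hsubst : (fun ε => erfc (k * √ε⁻¹) * exp (-u_a * √ε⁻¹ ^ 2)) =ᶠ[𝓝[>] 0]
      fun ε => erfc ((a - x) / √(2 * t * ε)) * exp (-u_a / ε) := by
    filter_upwards [self_mem_nhdsWithin] with ε (hε : 0 < ε)
    rw [sq_sqrt (inv_nonneg.2 hε.le), sqrt_inv, sqrt_mul h2t.le, div_mul_eq_div_div,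
      div_eq_mul_inv, div_eq_mul_inv (-u_a)]
  constructor
  · intro hxa
    have : -2 * u_a * t < (a - x) ^ 2 := (sqrt_lt' hax).1 (by linarith)
    refine ((tendsto_erfc_mul_mul_exp_mul_sq_zero hk ?_).comp hy).congr' hsubst
    rw [hk2, le_div_iff₀ h2t]
    linarith
  · intro hxa
    have : (a - x) ^ 2 < -2 * u_a * t := (lt_sqrt hax.le).1 (by linarith)
    refine ((tendsto_erfc_mul_mul_exp_mul_sq_atTop hk.le ?_).comp hy).congr' hsubst
    rw [hk2, div_lt_iff₀ h2t]
    linarith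

theorem erfc_A_eps_exp_limit (a x t u_a : ℝ) (hx : x < a) (ht : 0 < t) (hu : u_a < 0) :
    (x < a - Real.sqrt (-2 * u_a * t) →
      Filter.Tendsto
        (fun ε : ℝ => erfc ((a - x) / Real.sqrt (2 * t * ε)) * Real.exp (-u_a / ε))
        (nhdsWithin 0 (Set.Ioi 0)) (nhds 0)) ∧
    (a - Real.sqrt (-2 * u_a * t) < x →
      Filter.Tendsto
        (fun ε : ℝ => erfc ((a - x) / Real.sqrt (2 * t * ε)) * Real.exp (-u_a / ε))
        (nhdsWithin 0 (Set.Ioi 0)) Filter.atTop) :=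
  erfc_A_eps_exp_limit_general a x t u_a hx ht
end
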